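/- arXiv:1306.3123 — 4 statements merged into one kernel-verified Lean document; each statement's English description precedes it below -/
import Mathlib

section
/- Let u be an infinite word with bounded repetition. Then the periodicity complexity of u tends to infinity: lim_{i→∞} h_u(i) = ∞. -/
open scoped BigOperators ENNReal

namespace PeriodicityComplexity

variable {A : Type*}

/-- The finite word `z` occurs in the infinite word `w` at the (0-based) index `j`,
i.e. `z` occupies positions `j+1, …, j+|z|` of `w`. -/
def OccursAt (w : ℕ → A) (z : List A) (j : ℕ) : Prop :=
  z = List.ofFn (fun t : Fin z.length => w (j + t))

/-- `z` is a (finite) factor of the infinite word `w`. -/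
def IsFactor (w : ℕ → A) (z : List A) : Prop := ∃ j, OccursAt w z j

/-- An infinite word is uniformly recurrent if every factor occurs with bounded gaps. -/
def UniformlyRecurrent (w : ℕ → A) : Prop :=
  ∀ z : List A, IsFactor w z → ∃ N : ℕ, ∀ j : ℕ, ∃ t, j ≤ t ∧ t < j + N ∧ OccursAt w z t

/-- An infinite word is periodic if some `p ≥ 1` is a period of all of it. -/
def Periodic (w : ℕ → A) : Prop := ∃ p : ℕ, 1 ≤ p ∧ ∀ i, w (i + p) = w i

/-- An infinite word is ultimately periodic if some `p ≥ 1` is a period from some point on. -/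
def UltimatelyPeriodic (w : ℕ → A) : Prop :=
  ∃ p : ℕ, 1 ≤ p ∧ ∃ N : ℕ, ∀ i, N ≤ i → w (i + p) = w i

/-- The `e`-fold concatenation `v^e` of a finite word `v`. -/
def wpow (v : List A) (e : ℕ) : List A := (List.replicate e v).flatten

/-- The prefix of length `i` of an infinite word. -/
def wordPrefix (w : ℕ → A) (i : ℕ) : List A := List.ofFn (fun t : Fin i => w t)

/-- `r` is a repetition word at position `i` of the infinite word `w` (`w = uv`, `|u| = i`):
`r` is nonempty, suffix-comparable with `u`, and a prefix of the infinite remainder `v`. -/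
def IsRepWordAt (w : ℕ → A) (i : ℕ) (r : List A) : Prop :=
  r ≠ [] ∧ (r <:+ wordPrefix w i ∨ wordPrefix w i <:+ r) ∧ OccursAt w r i

/-- Local period of an infinite word at position `i`, as an extended nonnegative real
(`⊤` if there is no repetition word at that position). -/
noncomputable def localPeriod (w : ℕ → A) (i : ℕ) : ℝ≥0∞ :=
  sInf ((fun r : List A => (r.length : ℝ≥0∞)) '' {r | IsRepWordAt w i r})

/-- Periodicity complexity `h_w(i) = (1/i) ∑_{j=1}^{i} p_w(j)` of an infinite word. -/
noncomputable def pcomplexity (w : ℕ → A) (i : ℕ) : ℝ≥0∞ :=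
  (∑ j ∈ Finset.Icc 1 i, localPeriod w j) / (i : ℝ≥0∞)

/-- `r` is a repetition word at position `i` of the finite word `v` (`v = xy`, `|x| = i`):
`r` is nonempty, suffix-comparable with `x` and prefix-comparable with `y`. -/
def IsRepWordAtF (v : List A) (i : ℕ) (r : List A) : Prop :=
  r ≠ [] ∧ (r <:+ v.take i ∨ v.take i <:+ r) ∧ (r <+: v.drop i ∨ v.drop i <+: r)

/-- Local period of a finite word at position `i`. -/
noncomputable def localPeriodF (v : List A) (i : ℕ) : ℕ :=
  sInf {n : ℕ | ∃ r : List A, IsRepWordAtF v i r ∧ r.length = n}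

/-- Average local period `h(v) = (1/|v|) ∑_{i=1}^{|v|} p_v(i)` of a finite word. -/
noncomputable def hF (v : List A) : ℝ :=
  (∑ i ∈ Finset.Icc 1 v.length, (localPeriodF v i : ℝ)) / (v.length : ℝ)

/-- An infinite word is of bounded repetition if the exponents of powers of nonempty
words occurring in it are bounded. -/
def BoundedRepetition (w : ℕ → A) : Prop :=
  ∃ E : ℕ, ∀ (v : List A) (e : ℕ), v ≠ [] → IsFactor w (wpow v e) → e ≤ E

/-- `p` is a period of the finite word `z`. -/
def HasPeriodF (z : List A) (p : ℕ) : Prop :=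
  ∀ t : ℕ, t + p < z.length → z[t]? = z[t + p]?

/-- The (least) period of a finite word. -/
noncomputable def periodF (z : List A) : ℕ := sInf {p : ℕ | 1 ≤ p ∧ HasPeriodF z p}

/-- `r` is a return word to `z` in the infinite word `w`: `r` is the factor of `w` between
two consecutive occurrences of `z`. -/
def IsReturnWord (w : ℕ → A) (z r : List A) : Prop :=
  r ≠ [] ∧ ∃ j : ℕ, OccursAt w z j ∧ OccursAt w z (j + r.length) ∧
    (∀ t, j < t → t < j + r.length → ¬ OccursAt w z t) ∧ OccursAt w r j

/-- `l` is the length of some return word to `z` in `w`. -/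
def IsReturnLength (w : ℕ → A) (z : List A) (l : ℕ) : Prop :=
  ∃ r : List A, IsReturnWord w z r ∧ r.length = l

/-- The maximal return time of `z` in `w`. -/
noncomputable def maxReturnTime (w : ℕ → A) (z : List A) : ℕ :=
  sSup {l : ℕ | IsReturnLength w z l}

/-- A finite word is unbordered if no proper nonempty prefix of it is also a suffix. -/
def Unbordered (z : List A) : Prop :=
  ∀ b : List A, b ≠ [] → b.length < z.length → b <+: z → ¬ b <:+ z

/-- A finite word is primitive if it is not a (trivial or nontrivial) power of a word
other than itself. -/
def Primitive (z : List A) : Prop :=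
  ∀ (v : List A) (k : ℕ), z = wpow v k → k = 1

/-- A finite word is Lyndon if it is primitive and lexicographically minimal among its
conjugates: `z ≤ yx` for every factorization `z = xy`. -/
def IsLyndon [LinearOrder A] (z : List A) : Prop :=
  Primitive z ∧ ∀ x y : List A, z = x ++ y → z ≤ y ++ x

end PeriodicityComplexity

/-!
By the critical factorization theorem, every finite word of length at least two has a cut at
which every repetition word has the length of a period of the whole word. If `u` contains no
`(E + 1)`-th power, apply this to a window of length `(E + 1) T`: a repetition word shorter than
`T` at the critical cut would make the window begin with an `(E + 1)`-th power. So every window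
of length `(E + 1) T` contains a position of local period at least `T`, and for the scale
`T = 2^(m+1)` such positions have density at least `1 / (4 (E + 1) 2^m)`. Since
`p ≥ ∑ 2^m` over the scales with `2^(m+1) ≤ p`, each of the first `M` scales contributes at
least `1 / (4 (E + 1))` to the average `h_u(i)` once `i` is large, and `M` is arbitrary.
-/

namespace PeriodicityComplexity

section Words

open List Function

variable {B : Type*} {r : B → B → Prop}

theorem lex_append_of_ne_nil {x s : List B} (hs : s ≠ []) : Lex r x (x ++ s) := by
  obtain ⟨a, s, rfl⟩ := List.exists_cons_of_ne_nil hs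
  simpa using Lex.append_left r (Lex.nil (a := a) (l := s)) x

theorem prefix_of_not_lex_of_not_lex_swap [Std.Trichotomous r] :
    ∀ {x y : List B}, ¬ Lex r y x → ¬ Lex (swap r) y x → x <+: y
  | [], _, _, _ => nil_prefix
  | _ :: _, [], h, _ => absurd Lex.nil h
  | a :: x, b :: y, h, h' => by
    obtain rfl := Std.Trichotomous.trichotomous a b (fun hab => h' (Lex.rel hab))
      (fun hba => h (Lex.rel hba))
    exact cons_prefix_cons.2
      ⟨rfl, prefix_of_not_lex_of_not_lex_swap (mt Lex.cons h) (mt Lex.cons h')⟩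

def IsMaxSuffix (r : B → B → Prop) (z v : List B) : Prop :=
  v <:+ z ∧ ∀ s, s <:+ z → ¬ Lex r v s

theorem exists_isMaxSuffix (r : B → B → Prop) [IsStrictTotalOrder B r] (z : List B) :
    ∃ v, IsMaxSuffix r z v := by
  induction z with
  | nil => exact ⟨[], suffix_refl _, fun s hs => by rw [suffix_nil.1 hs]; exact not_lex_nil⟩
  | cons a z ih =>
    obtain ⟨v, hvz, hv⟩ := ih
    by_cases hlt : Lex r v (a :: z)
    · refine ⟨a :: z, suffix_refl _, fun s hs h => ?_⟩
      rcases suffix_cons_iff.1 hs with rfl | hs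
      · exact lex_irrefl irrefl _ h
      · exact hv s hs (lex_trans (fun h₁ h₂ => _root_.trans h₁ h₂) hlt h)
    · refine ⟨v, hvz.trans (suffix_cons a z), fun s hs => ?_⟩
      rcases suffix_cons_iff.1 hs with rfl | hs
      exacts [hlt, hv s hs]

theorem hasPeriodF_of_drop_prefix {z : List B} {p : ℕ} (h : z.drop p <+: z) :
    HasPeriodF z p := by
  intro t ht
  have ht' : t < (z.drop p).length := by simp; omega
  rw [getElem?_eq_getElem (by omega), getElem?_eq_getElem ht, ← h.getElem ht', getElem_drop]
  simp only [Nat.add_comm]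

theorem HasPeriodF.of_one {z : List B} (h : HasPeriodF z 1) (p : ℕ) : HasPeriodF z p := by
  induction p with
  | zero => intro t _; rfl
  | succ p ih => intro t ht; rw [ih t (by omega), h (t + p) ht, Nat.add_assoc]

theorem HasPeriodF.take_add {z : List B} {p m : ℕ} (h : HasPeriodF z p)
    (hm : p + m ≤ z.length) : z.take (p + m) = z.take p ++ z.take m := by
  rw [List.take_add]
  congr 1
  refine ext_getElem? fun t => ?_
  rw [getElem?_take, getElem?_take, getElem?_drop]
  split_ifs with ht
  · rw [Nat.add_comm, h t (by omega)]
  · rfl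

theorem HasPeriodF.take_mul_eq_wpow {z : List B} {p : ℕ} (h : HasPeriodF z p) :
    ∀ k, k * p ≤ z.length → z.take (k * p) = wpow (z.take p) k
  | 0, _ => by simp [wpow]
  | k + 1, hk => by
    rw [Nat.succ_mul, Nat.add_comm, h.take_add (by rwa [Nat.add_comm, ← Nat.succ_mul]),
      h.take_mul_eq_wpow k (by rw [Nat.succ_mul] at hk; omega)]
    simp [wpow, replicate_succ]

theorem IsMaxSuffix.hasPeriodF_of_isRepWordAtF [Std.Trichotomous r] {u v v' w : List B}
    (hv : IsMaxSuffix r (u ++ v) v) (hv' : IsMaxSuffix (swap r) (u ++ v) v')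
    (hlen : v.length ≤ v'.length) (hw : IsRepWordAtF (u ++ v) u.length w) :
    HasPeriodF (u ++ v) w.length := by
  obtain ⟨hne, hsuf, hpre⟩ := hw
  rw [take_left] at hsuf
  rw [drop_left] at hpre
  rcases hsuf with hsuf | ⟨t, rfl⟩
  · -- `w v` would be a suffix greater than `v`
    exfalso
    obtain ⟨g, rfl⟩ := hsuf
    have hmax : ¬ Lex r v (w ++ v) := hv.2 _ ⟨g, by simp⟩
    rcases hpre with ⟨v₃, rfl⟩ | ⟨s, rfl⟩
    · have h₁ : ¬ Lex r v₃ (w ++ v₃) := fun h => hmax (h.append_left r w)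
      have h₂ : ¬ Lex r (w ++ v₃) v₃ := hv.2 v₃ ((suffix_append _ _).trans hv.1)
      have := congrArg length (Std.Trichotomous.trichotomous _ _ h₁ h₂)
      simp at this
      exact hne this
    · have := lex_append_of_ne_nil (r := r) (x := v) (s := s ++ v) (by
        simp only [ne_eq, append_eq_nil_iff] at hne ⊢; tauto)
      exact hmax (by simpa using this)
  · apply hasPeriodF_of_drop_prefix
    rw [length_append, Nat.add_comm, ← drop_drop, drop_left]
    rcases hpre with ⟨v₃, rfl⟩ | hvp
    · -- `v₃` is at most `v` for both orders, hence a prefix of it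
      rw [append_assoc t u v₃, drop_left, prefix_append_right_inj, ← append_assoc]
      obtain ⟨e, rfl⟩ := suffix_of_suffix_length_le hv.1 hv'.1 hlen
      have heu : e <:+ u := by
        obtain ⟨g, hg⟩ := hv'.1
        exact ⟨g, append_cancel_right (by simpa using hg)⟩
      have hev₃ : e ++ v₃ <:+ u ++ (t ++ u ++ v₃) := by
        obtain ⟨g, hg⟩ := heu
        exact ⟨u ++ t ++ g, by rw [← hg]; simp⟩
      exact prefix_of_not_lex_of_not_lex_swap
        (hv.2 v₃ ((suffix_append _ _).trans hv.1))
        (fun h => hv'.2 _ hev₃ (h.append_left _ e))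
    · exact (hvp.drop t.length).trans (by rw [drop_left]; exact prefix_append u v)

theorem exists_critical_position_of_isMaxSuffix [Std.Trichotomous r] {z v v' : List B}
    (hz : 2 ≤ z.length) (hv : IsMaxSuffix r z v) (hv' : IsMaxSuffix (swap r) z v')
    (hlen : v.length ≤ v'.length) :
    ∃ c, 0 < c ∧ c < z.length ∧ ∀ w, IsRepWordAtF z c w → HasPeriodF z w.length := by
  obtain ⟨u, rfl⟩ := hv.1
  have hcrit : ∀ w, IsRepWordAtF (u ++ v) u.length w → HasPeriodF (u ++ v) w.length :=
    fun _ => hv.hasPeriodF_of_isRepWordAtF hv' hlen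
  rcases eq_or_ne u [] with rfl | hu
  · -- here `v` is the whole word, and a one-letter repetition word at `0` gives period `1`
    obtain ⟨a, v₀, rfl⟩ : ∃ a v₀, v = a :: v₀ :=
      exists_cons_of_ne_nil (ne_nil_of_length_pos (by simp at hz; omega))
    have h1 : HasPeriodF ([] ++ a :: v₀) 1 :=
      hcrit [a] ⟨by simp, Or.inr nil_suffix, Or.inl (by simp)⟩
    exact ⟨1, one_pos, by simp at hz ⊢; omega, fun w _ => h1.of_one _⟩
  · have hv0 : v ≠ [] := by
      rintro rfl
      obtain ⟨a, u, rfl⟩ := exists_cons_of_ne_nil hu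
      exact hv.2 _ (suffix_refl _) Lex.nil
    exact ⟨u.length, length_pos_iff.2 hu, by simpa using length_pos_iff.2 hv0, hcrit⟩

/-- The critical factorization theorem (Cesari–Vincent, Duval; in the form of
Crochemore–Perrin). -/
theorem exists_critical_position (z : List B) (hz : 2 ≤ z.length) :
    ∃ c, 0 < c ∧ c < z.length ∧ ∀ w, IsRepWordAtF z c w → HasPeriodF z w.length := by
  obtain ⟨r, _⟩ : ∃ r : B → B → Prop, IsStrictTotalOrder B r :=
    ⟨WellOrderingRel, inferInstance⟩
  obtain ⟨v, hv⟩ := exists_isMaxSuffix r z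
  obtain ⟨v', hv'⟩ := exists_isMaxSuffix (swap r) z
  rcases le_total v.length v'.length with hlen | hlen
  · exact exists_critical_position_of_isMaxSuffix hz hv hv' hlen
  · exact exists_critical_position_of_isMaxSuffix (r := swap r) hz hv' hv hlen

end Words

section InfiniteWords

open List

variable {A : Type*}

/-- The factor of length `l` of `w` starting at the 0-based index `s`. -/
def factorAt (w : ℕ → A) (s l : ℕ) : List A := List.ofFn fun t : Fin l => w (s + t)

@[simp]
theorem length_factorAt (w : ℕ → A) (s l : ℕ) : (factorAt w s l).length = l :=
  length_ofFn

theorem factorAt_add (w : ℕ → A) (s m n : ℕ) :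
    factorAt w s (m + n) = factorAt w s m ++ factorAt w (s + m) n := by
  simp only [factorAt, ofFn_add, Fin.val_castLE, Fin.val_natAdd, Nat.add_assoc]

theorem take_factorAt (w : ℕ → A) {s l m : ℕ} (h : m ≤ l) :
    (factorAt w s l).take m = factorAt w s m := by
  rw [← Nat.add_sub_cancel' h, factorAt_add, take_left' (length_factorAt ..)]

theorem drop_factorAt (w : ℕ → A) {s l m : ℕ} (h : m ≤ l) :
    (factorAt w s l).drop m = factorAt w (s + m) (l - m) := by
  conv_lhs => rw [← Nat.add_sub_cancel' h, factorAt_add]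
  exact drop_left' (length_factorAt ..)

theorem factorAt_prefix_factorAt (w : ℕ → A) (s : ℕ) {m n : ℕ} (h : m ≤ n) :
    factorAt w s m <+: factorAt w s n := by
  rw [← Nat.add_sub_cancel' h, factorAt_add]
  exact prefix_append _ _

theorem occursAt_factorAt (w : ℕ → A) (s l : ℕ) : OccursAt w (factorAt w s l) s := by
  unfold OccursAt
  rw [length_factorAt]
  rfl

theorem wordPrefix_eq_factorAt (w : ℕ → A) (i : ℕ) : wordPrefix w i = factorAt w 0 i := by
  simp [wordPrefix, factorAt]

theorem IsRepWordAt.isRepWordAtF_factorAt {w : ℕ → A} {s c l : ℕ} {r : List A}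
    (hr : IsRepWordAt w (s + c) r) (hc : c ≤ l) : IsRepWordAtF (factorAt w s l) c r := by
  obtain ⟨hne, hsuf, hocc⟩ := hr
  refine ⟨hne, ?_, ?_⟩
  · have hleft : factorAt w s c <:+ wordPrefix w (s + c) := by
      rw [wordPrefix_eq_factorAt, factorAt_add, Nat.zero_add]
      exact suffix_append _ _
    rw [take_factorAt w hc]
    rcases hsuf with hsuf | hsuf
    · exact suffix_or_suffix_of_suffix hsuf hleft
    · exact Or.inr (hleft.trans hsuf)
  · rw [drop_factorAt w hc, hocc]
    rcases le_total r.length (l - c) with h | h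
    · exact Or.inl (factorAt_prefix_factorAt w _ h)
    · exact Or.inr (factorAt_prefix_factorAt w _ h)

theorem le_localPeriod {w : ℕ → A} {j T : ℕ} (h : ∀ r, IsRepWordAt w j r → T ≤ r.length) :
    (T : ℝ≥0∞) ≤ localPeriod w j :=
  le_sInf <| by
    rintro _ ⟨r, hr, rfl⟩
    show (T : ℝ≥0∞) ≤ r.length
    exact_mod_cast h r hr

theorem exists_le_localPeriod_of_window {w : ℕ → A} {E T : ℕ}
    (hE : ∀ (v : List A) (e : ℕ), v ≠ [] → IsFactor w (wpow v e) → e ≤ E) (hT : 2 ≤ T)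
    (s : ℕ) : ∃ j, s < j ∧ j < s + (E + 1) * T ∧ (T : ℝ≥0∞) ≤ localPeriod w j := by
  set z := factorAt w s ((E + 1) * T)
  have hz : z.length = (E + 1) * T := length_factorAt ..
  obtain ⟨c, hc0, hcz, hcrit⟩ := exists_critical_position z (by rw [hz]; nlinarith)
  refine ⟨s + c, by omega, by omega, le_localPeriod fun r hr => ?_⟩
  by_contra! hlt
  have hper := hcrit r (hr.isRepWordAtF_factorAt (hz ▸ hcz.le))
  have hq : 0 < r.length := length_pos_iff.2 hr.1
  have hpow : (E + 1) * r.length ≤ z.length := by rw [hz]; exact Nat.mul_le_mul_left _ hlt.le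
  have hfactor : IsFactor w (wpow (z.take r.length) (E + 1)) :=
    ⟨s, by
      rw [← hper.take_mul_eq_wpow _ hpow, take_factorAt w (hz ▸ hpow)]
      exact occursAt_factorAt w s _⟩
  have hne : z.take r.length ≠ [] := by
    rw [← length_pos_iff, length_take, hz]
    exact lt_min hq (by nlinarith)
  exact absurd (hE _ _ hne hfactor) (by omega)

end InfiniteWords

section Averages

open Finset

theorem le_two_mul_card_filter {p : ℕ → Prop} [DecidablePred p] {L i : ℕ}
    (hwin : ∀ s, ∃ j, s < j ∧ j < s + L ∧ p j) (hi : L ≤ i) :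
    i ≤ 2 * L * #{j ∈ Icc 1 i | p j} := by
  choose g hg₁ hg₂ hgp using hwin
  have hL : 0 < L := by have := hg₁ 0; have := hg₂ 0; omega
  have hmono : StrictMono fun k => g (k * L) := fun a b hab => by
    show g (a * L) < g (b * L)
    have := hg₂ (a * L); have := hg₁ (b * L)
    have : a * L + L ≤ b * L := by rw [← Nat.succ_mul]; exact Nat.mul_le_mul_right _ hab
    omega
  have hcount : i / L ≤ #{j ∈ Icc 1 i | p j} := by
    rw [← card_range (i / L)]
    refine card_le_card_of_injOn _ (fun k hk => ?_) hmono.injective.injOn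
    have hk : (k + 1) * L ≤ i := (Nat.le_div_iff_mul_le hL).1 (by simp at hk; omega)
    have := hg₁ (k * L); have := hg₂ (k * L)
    rw [mem_coe, mem_filter, mem_Icc]
    exact ⟨⟨by omega, by rw [Nat.succ_mul] at hk; omega⟩, hgp _⟩
  have hq : 1 ≤ i / L := (Nat.one_le_div_iff hL).2 hi
  have := Nat.lt_mul_div_succ i hL
  nlinarith

theorem sum_range_ite_pow_two_le (x : ℝ≥0∞) (M : ℕ) :
    ∑ m ∈ range M, (if (2 : ℝ≥0∞) ^ (m + 1) ≤ x then 2 ^ m else 0) ≤ x := by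
  induction M with
  | zero => simp
  | succ M ih =>
    rw [sum_range_succ]
    split_ifs with h
    · have hgeom : ∑ m ∈ range M, (2 : ℝ≥0∞) ^ m ≤ 2 ^ M := by
        exact_mod_cast (Nat.geomSum_lt le_rfl fun k hk => mem_range.1 hk).le
      calc _ ≤ ∑ m ∈ range M, (2 : ℝ≥0∞) ^ m + 2 ^ M := by
            gcongr with m
            split_ifs <;> simp
        _ ≤ 2 ^ M + 2 ^ M := by gcongr
        _ = 2 ^ (M + 1) := by rw [pow_succ, mul_two]
        _ ≤ x := h
    · simpa using ih

theorem sum_pow_two_mul_card_le (f : ℕ → ℝ≥0∞) (s : Finset ℕ) (M : ℕ) :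
    ∑ m ∈ range M, (2 : ℝ≥0∞) ^ m * #{j ∈ s | 2 ^ (m + 1) ≤ f j} ≤ ∑ j ∈ s, f j := by
  calc _ = ∑ m ∈ range M, ∑ j ∈ s, (if (2 : ℝ≥0∞) ^ (m + 1) ≤ f j then (2 : ℝ≥0∞) ^ m else 0) := by
        refine sum_congr rfl fun m _ => ?_
        rw [← sum_filter, sum_const, nsmul_eq_mul, mul_comm]
    _ = ∑ j ∈ s, ∑ m ∈ range M, (if (2 : ℝ≥0∞) ^ (m + 1) ≤ f j then (2 : ℝ≥0∞) ^ m else 0) :=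
        sum_comm
    _ ≤ ∑ j ∈ s, f j := sum_le_sum fun j _ => sum_range_ite_pow_two_le (f j) M

theorem exists_le_average_of_windows (f : ℕ → ℝ≥0∞) (C : ℕ)
    (hwin : ∀ T, 2 ≤ T → ∀ s, ∃ j, s < j ∧ j < s + C * T ∧ (T : ℝ≥0∞) ≤ f j) (n : ℕ) :
    ∃ N, ∀ i, N ≤ i → (n : ℝ≥0∞) ≤ (∑ j ∈ Icc 1 i, f j) / i := by
  have hC : 0 < C := by
    obtain ⟨j, h₁, h₂, -⟩ := hwin 2 le_rfl 0
    omega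
  set M := 4 * C * n
  refine ⟨C * 2 ^ M, fun i hi => ?_⟩
  set N := fun m => #{j ∈ Icc 1 i | (2 : ℝ≥0∞) ^ (m + 1) ≤ f j}
  have hscale : ∀ m ∈ range M, i ≤ 4 * C * (2 ^ m * N m) := fun m hm => by
    have hL : C * 2 ^ (m + 1) ≤ i :=
      le_trans (Nat.mul_le_mul_left _ (Nat.pow_le_pow_right two_pos (mem_range.1 hm))) hi
    have := le_two_mul_card_filter (p := fun j => (2 : ℝ≥0∞) ^ (m + 1) ≤ f j)
      (fun s => by simpa using hwin (2 ^ (m + 1)) (Nat.le_self_pow (Nat.succ_ne_zero m) 2) s) hL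
    calc i ≤ 2 * (C * 2 ^ (m + 1)) * N m := this
      _ = 4 * C * (2 ^ m * N m) := by ring
  have hnat : n * i ≤ ∑ m ∈ range M, 2 ^ m * N m := by
    refine Nat.le_of_mul_le_mul_left ?_ (by positivity : 0 < 4 * C)
    calc 4 * C * (n * i) = ∑ _m ∈ range M, i := by simp [M]; ring
      _ ≤ ∑ m ∈ range M, 4 * C * (2 ^ m * N m) := sum_le_sum hscale
      _ = 4 * C * ∑ m ∈ range M, 2 ^ m * N m := (mul_sum ..).symm
  have hi0 : (i : ℝ≥0∞) ≠ 0 := by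
    have : 0 < C * 2 ^ M := by positivity
    exact_mod_cast (show i ≠ 0 by omega)
  rw [ENNReal.le_div_iff_mul_le (Or.inl hi0) (Or.inl (ENNReal.natCast_ne_top i))]
  calc (n : ℝ≥0∞) * i ≤ ((∑ m ∈ range M, 2 ^ m * N m : ℕ) : ℝ≥0∞) := by exact_mod_cast hnat
    _ = ∑ m ∈ range M, (2 : ℝ≥0∞) ^ m * N m := by push_cast; rfl
    _ ≤ ∑ j ∈ Icc 1 i, f j := sum_pow_two_mul_card_le f _ M

end Averages

end PeriodicityComplexity

open PeriodicityComplexity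

/-- If `u` is an infinite word with bounded repetition, then its
periodicity complexity tends to infinity. -/
theorem periodicity_complexity_tendsto_top_of_boundedRepetition
    {A : Type*} (u : ℕ → A) (hbr : BoundedRepetition u) :
    ∀ n : ℕ, ∃ iN : ℕ, ∀ i : ℕ, iN ≤ i → (n : ℝ≥0∞) ≤ pcomplexity u i := by
  obtain ⟨E, hE⟩ := hbr
  exact exists_le_average_of_windows (localPeriod u) (E + 1)
    fun T hT s => exists_le_localPeriod_of_window hE hT s
end

section
/- Let u be an infinite non-periodic uniformly recurrent word and let v be a nonempty factor of u. Then the set of integers e such that v^e is a factor of u is finite. -/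
open scoped BigOperators ENNReal

/-
If `v ^ e` occurs in `u` for infinitely many `e`, then `u` contains arbitrarily long factors of
period `|v|`. By uniform recurrence, every prefix of `u` occurs inside each sufficiently long
factor, hence inside one of period `|v|`; so every prefix of `u` has period `|v|`, and `u` is
periodic.
-/

namespace PeriodicityComplexity

variable {A : Type*}

lemma OccursAt.getElem? {w : ℕ → A} {z : List A} {j : ℕ} (h : OccursAt w z j) {s : ℕ}
    (hs : s < z.length) : z[s]? = some (w (j + s)) := by
  rw [h]
  simp [hs]

lemma occursAt_of_getElem {w : ℕ → A} {z : List A} {j : ℕ}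
    (h : ∀ s (hs : s < z.length), z[s] = w (j + s)) : OccursAt w z j :=
  List.ext_getElem (by simp) fun s hs _ => by simp [h s hs]

lemma occursAt_wordPrefix (w : ℕ → A) (n : ℕ) : OccursAt w (wordPrefix w n) 0 :=
  occursAt_of_getElem fun s _ => by simp [wordPrefix]

lemma length_wpow (v : List A) (e : ℕ) : (wpow v e).length = e * v.length := by
  simp [wpow]

lemma wpow_succ (v : List A) (e : ℕ) : wpow v (e + 1) = v ++ wpow v e := by
  simp [wpow, List.replicate_succ]

lemma getElem?_wpow {v : List A} {e m : ℕ} (hm : m < e * v.length) :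
    (wpow v e)[m]? = v[m % v.length]? := by
  induction e generalizing m with
  | zero => simp at hm
  | succ e ih =>
    rw [wpow_succ]
    rcases lt_or_ge m v.length with h | h
    · rw [List.getElem?_append_left h, Nat.mod_eq_of_lt h]
    · rw [List.getElem?_append_right h, ih (by rw [Nat.succ_mul] at hm; omega),
        ← Nat.mod_eq_sub_mod h]

lemma hasPeriodF_wpow (v : List A) (e : ℕ) : HasPeriodF (wpow v e) v.length := by
  intro t ht
  rw [length_wpow] at ht
  rw [getElem?_wpow (by omega), getElem?_wpow ht, Nat.add_mod_right]

lemma OccursAt.apply_add_of_hasPeriodF {w : ℕ → A} {z : List A} {j p m : ℕ}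
    (hz : OccursAt w z j) (hp : HasPeriodF z p) (hm : m + p < z.length) :
    w (j + m + p) = w (j + m) := by
  have := hp m hm
  rwa [hz.getElem? (by omega), hz.getElem? hm, Option.some_inj, ← add_assoc, eq_comm] at this

theorem UniformlyRecurrent.apply_add_eq_of_long_hasPeriodF {w : ℕ → A}
    (hw : UniformlyRecurrent w) {p : ℕ}
    (hlong : ∀ n, ∃ z, n ≤ z.length ∧ HasPeriodF z p ∧ IsFactor w z) (i : ℕ) :
    w (i + p) = w i := by
  let P := wordPrefix w (i + p + 1)
  have hPlen : P.length = i + p + 1 := by simp [P, wordPrefix]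
  obtain ⟨N, hN⟩ := hw P ⟨0, occursAt_wordPrefix w _⟩
  obtain ⟨z, hzlen, hzp, j, hz⟩ := hlong (N + i + p + 1)
  obtain ⟨t, hjt, htN, ht⟩ := hN j
  have hshift : ∀ s < P.length, w s = w (t + s) := fun s hs => by
    rw [← Option.some_inj, ← ht.getElem? hs, (occursAt_wordPrefix w _).getElem? hs, zero_add]
  obtain ⟨d, rfl⟩ := Nat.exists_eq_add_of_le hjt
  calc w (i + p) = w (j + (d + i) + p) := by rw [hshift _ (by omega)]; ring_nf
    _ = w (j + (d + i)) := hz.apply_add_of_hasPeriodF hzp (by omega)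
    _ = w i := by rw [hshift i (by omega), add_assoc]

end PeriodicityComplexity

open PeriodicityComplexity

theorem finite_exponents_of_uniformlyRecurrent_general
    {A : Type*} (u : ℕ → A) (hur : UniformlyRecurrent u) (hnp : ¬ Periodic u)
    (v : List A) (hv : v ≠ []) :
    {e : ℕ | IsFactor u (wpow v e)}.Finite := by
  by_contra hinf
  have hlong : ∀ n, ∃ z, n ≤ z.length ∧ HasPeriodF z v.length ∧ IsFactor u z := fun n => by
    obtain ⟨e, he, hne⟩ := Set.Infinite.exists_gt hinf n
    refine ⟨wpow v e, ?_, hasPeriodF_wpow v e, he⟩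
    rw [length_wpow]
    exact hne.le.trans (Nat.le_mul_of_pos_right e (List.length_pos_iff.mpr hv))
  exact hnp ⟨v.length, List.length_pos_iff.mpr hv, hur.apply_add_eq_of_long_hasPeriodF hlong⟩

/-- If `u` is an infinite non-periodic uniformly recurrent word and `v` is a
nonempty factor of `u`, then the set of integers `e` such that `v^e` is a factor of `u`
is finite. -/
theorem finite_exponents_of_uniformlyRecurrent
    {A : Type*} (u : ℕ → A) (hur : UniformlyRecurrent u) (hnp : ¬ Periodic u)
    (v : List A) (hv : v ≠ []) (hfac : IsFactor u v) :
    {e : ℕ | IsFactor u (wpow v e)}.Finite :=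
  finite_exponents_of_uniformlyRecurrent_general u hur hnp v hv
end

section
/- For any nonempty finite words x and y, h(xy) ≥ (|x|·h(x) + |y|·h(y)) / |xy|, i.e. the sum of the local periods of xy over all its positions is at least the sum of the local periods of x over its positions plus the sum of the local periods of y over its positions. -/
open scoped BigOperators ENNReal

/-!
Every repetition word of `xy` at a position inside `x` (resp. inside `y`) is also a repetition
word of `x` (resp. of `y`) at that position, since cutting the word only shortens the two sides
it has to be comparable with. So each local period of `x` or `y` is at most the corresponding
local period of `xy`, and summing gives `|x| h(x) + |y| h(y) ≤ |xy| h(xy)`.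
-/

theorem Finset.sum_Icc_one_add {M : Type*} [AddCommMonoid M] (f : ℕ → M) (m n : ℕ) :
    ∑ i ∈ Icc 1 (m + n), f i = ∑ i ∈ Icc 1 m, f i + ∑ i ∈ Icc 1 n, f (m + i) := by
  induction n with
  | zero => simp
  | succ n ih =>
    rw [← add_assoc, sum_Icc_succ_top (by omega), ih, sum_Icc_succ_top (by omega)]
    simp only [add_assoc]

namespace PeriodicityComplexity

variable {A : Type*}

theorem isRepWordAtF_rotate {v : List A} (hv : v ≠ []) (i : ℕ) :
    IsRepWordAtF v i (v.drop i ++ v.take i) := by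
  refine ⟨?_, Or.inr (List.suffix_append _ _), Or.inr (List.prefix_append _ _)⟩
  intro h
  have hlen := congrArg List.length h
  simp only [List.length_append, List.length_drop, List.length_take, List.length_nil] at hlen
  exact hv (List.eq_nil_of_length_eq_zero (by omega))

theorem localPeriodF_le_of_forall_isRepWordAtF {v w : List A} {i j : ℕ} (hw : w ≠ [])
    (h : ∀ r, IsRepWordAtF w j r → IsRepWordAtF v i r) :
    localPeriodF v i ≤ localPeriodF w j := by
  obtain ⟨r, hr, hlen⟩ : localPeriodF w j ∈
      {n : ℕ | ∃ r : List A, IsRepWordAtF w j r ∧ r.length = n} :=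
    Nat.sInf_mem ⟨_, _, isRepWordAtF_rotate hw j, rfl⟩
  exact Nat.sInf_le ⟨r, h r hr, hlen⟩

theorem IsRepWordAtF.of_append_left {x y r : List A} {i : ℕ} (hi : i ≤ x.length)
    (h : IsRepWordAtF (x ++ y) i r) : IsRepWordAtF x i r := by
  obtain ⟨hne, hsuf, hpre⟩ := h
  rw [List.take_append_of_le_length hi] at hsuf
  rw [List.drop_append_of_le_length hi] at hpre
  refine ⟨hne, hsuf, ?_⟩
  rcases hpre with hpre | hpre
  · exact List.prefix_or_prefix_of_prefix hpre (List.prefix_append _ _)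
  · exact Or.inr ((List.prefix_append _ _).trans hpre)

theorem IsRepWordAtF.of_append_right {x y r : List A} {i : ℕ}
    (h : IsRepWordAtF (x ++ y) (x.length + i) r) : IsRepWordAtF y i r := by
  obtain ⟨hne, hsuf, hpre⟩ := h
  rw [List.take_length_add_append] at hsuf
  rw [List.drop_length_add_append] at hpre
  refine ⟨hne, ?_, hpre⟩
  rcases hsuf with hsuf | hsuf
  · exact List.suffix_or_suffix_of_suffix hsuf (List.suffix_append _ _)
  · exact Or.inr ((List.suffix_append _ _).trans hsuf)

theorem sum_localPeriodF_add_sum_le_append (x y : List A) :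
    ∑ i ∈ Finset.Icc 1 x.length, localPeriodF x i +
        ∑ i ∈ Finset.Icc 1 y.length, localPeriodF y i ≤
      ∑ i ∈ Finset.Icc 1 (x ++ y).length, localPeriodF (x ++ y) i := by
  rcases eq_or_ne (x ++ y) [] with hxy | hxy
  · obtain ⟨rfl, rfl⟩ := List.append_eq_nil_iff.mp hxy
    simp
  rw [List.length_append, Finset.sum_Icc_one_add]
  gcongr with i hi i
  · exact localPeriodF_le_of_forall_isRepWordAtF hxy
      fun r => IsRepWordAtF.of_append_left (Finset.mem_Icc.mp hi).2
  · exact localPeriodF_le_of_forall_isRepWordAtF hxy fun r => IsRepWordAtF.of_append_right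

theorem length_mul_hF (v : List A) :
    (v.length : ℝ) * hF v = ∑ i ∈ Finset.Icc 1 v.length, (localPeriodF v i : ℝ) := by
  rcases eq_or_ne v [] with rfl | hv
  · simp
  · exact mul_div_cancel₀ _ (Nat.cast_ne_zero.mpr (List.length_pos_iff.mpr hv).ne')

end PeriodicityComplexity

open PeriodicityComplexity

theorem hF_append_ge_general
    {A : Type*} (x y : List A) :
    ((x.length : ℝ) * hF x + (y.length : ℝ) * hF y) / ((x ++ y).length : ℝ) ≤
      hF (x ++ y) := by
  rw [length_mul_hF, length_mul_hF, hF]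
  gcongr
  exact_mod_cast sum_localPeriodF_add_sum_le_append x y

/-- For nonempty finite words `x` and `y`,
`h(xy) ≥ (|x|·h(x) + |y|·h(y)) / |xy|`. -/
theorem hF_append_ge
    {A : Type*} (x y : List A) (hx : x ≠ []) (hy : y ≠ []) :
    ((x.length : ℝ) * hF x + (y.length : ℝ) * hF y) / ((x ++ y).length : ℝ) ≤
      hF (x ++ y) :=
  hF_append_ge_general x y
end

section
/- Let w = x v z be a factorization of a (finite or infinite) word w with x, z finite or z infinite, and let 1 ≤ i ≤ |v| be a position of v. Then p_v(i) ≤ p_w(|x| + i): the local period of w at the position corresponding to position i of the factor v is at least the local period of v at position i. -/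
open scoped BigOperators ENNReal

namespace PeriodicityComplexity

variable {A : Type*}

/-!
A repetition word of `x ++ v ++ z` at position `|x| + i` is already a repetition word of `v` at
position `i`: two suffixes of `x ++ v.take i` are suffix-comparable, and two prefixes of
`v.drop i ++ z` are prefix-comparable. An infinite word `w` reduces to this case, since a
repetition word `r` of `w` at `j` is one of every prefix of `w` of length at least `j + |r|`, and
a long enough prefix has the form `x ++ v ++ z`.
-/

section LocalPeriodFactor

variable {w : ℕ → A} {x v z r : List A} {i j n : ℕ}

theorem IsRepWordAtF.of_append_append (hi : i ≤ v.length)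
    (hr : IsRepWordAtF (x ++ v ++ z) (x.length + i) r) : IsRepWordAtF v i r := by
  obtain ⟨hne, hsuf, hpre⟩ := hr
  have htake : (x ++ v ++ z).take (x.length + i) = x ++ v.take i := by
    rw [List.append_assoc, List.take_length_add_append, List.take_append_of_le_length hi]
  have hdrop : (x ++ v ++ z).drop (x.length + i) = v.drop i ++ z := by
    rw [List.append_assoc, List.drop_length_add_append, List.drop_append_of_le_length hi]
  rw [htake] at hsuf
  rw [hdrop] at hpre
  refine ⟨hne, ?_, ?_⟩
  · rcases hsuf with h | h
    · exact List.suffix_or_suffix_of_suffix h (List.suffix_append x _)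
    · exact Or.inr ((List.suffix_append x _).trans h)
  · rcases hpre with h | h
    · exact List.prefix_or_prefix_of_prefix h (List.prefix_append _ z)
    · exact Or.inr ((List.prefix_append _ z).trans h)

theorem localPeriodF_le_length (h : IsRepWordAtF v i r) : localPeriodF v i ≤ r.length :=
  Nat.sInf_le ⟨r, h, rfl⟩

theorem isRepWordAtF_drop_append_take (hv : v ≠ []) (i : ℕ) :
    IsRepWordAtF v i (v.drop i ++ v.take i) := by
  refine ⟨List.ne_nil_of_length_pos ?_, Or.inr (List.suffix_append _ _),
    Or.inr (List.prefix_append _ _)⟩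
  have := List.length_pos_iff.mpr hv
  simp only [List.length_append, List.length_drop, List.length_take]
  omega

theorem exists_isRepWordAtF_length_eq_localPeriodF (hv : v ≠ []) (i : ℕ) :
    ∃ r, IsRepWordAtF v i r ∧ r.length = localPeriodF v i :=
  Nat.sInf_mem (s := {n | ∃ r, IsRepWordAtF v i r ∧ r.length = n})
    ⟨_, _, isRepWordAtF_drop_append_take hv i, rfl⟩

theorem localPeriodF_le_localPeriodF_append_append (hv : v ≠ []) (hi : i ≤ v.length) :
    localPeriodF v i ≤ localPeriodF (x ++ v ++ z) (x.length + i) := by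
  obtain ⟨r, hr, hlen⟩ :=
    exists_isRepWordAtF_length_eq_localPeriodF (v := x ++ v ++ z) (by simp [hv]) (x.length + i)
  exact hlen ▸ localPeriodF_le_length (hr.of_append_append hi)

theorem wordPrefix_add (w : ℕ → A) (j n : ℕ) :
    wordPrefix w (j + n) = wordPrefix w j ++ List.ofFn (fun t : Fin n => w (j + t)) := by
  simp [wordPrefix, List.ofFn_add]

theorem OccursAt.wordPrefix_add_length (h : OccursAt w r j) :
    wordPrefix w (j + r.length) = wordPrefix w j ++ r := by
  rw [wordPrefix_add, ← h]

theorem OccursAt.wordPrefix_length (h : OccursAt w r 0) : wordPrefix w r.length = r := by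
  simpa [wordPrefix] using h.symm

theorem wordPrefix_prefix_wordPrefix (h : j ≤ n) : wordPrefix w j <+: wordPrefix w n := by
  obtain ⟨k, rfl⟩ := Nat.exists_eq_add_of_le h
  exact wordPrefix_add w j k ▸ List.prefix_append _ _

theorem IsRepWordAt.isRepWordAtF_wordPrefix (hr : IsRepWordAt w j r) (hn : j + r.length ≤ n) :
    IsRepWordAtF (wordPrefix w n) j r := by
  obtain ⟨hne, hsuf, hocc⟩ := hr
  obtain ⟨t, ht⟩ := wordPrefix_prefix_wordPrefix (w := w) hn
  rw [hocc.wordPrefix_add_length, List.append_assoc] at ht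
  have hj : (wordPrefix w j).length = j := by simp [wordPrefix]
  refine ⟨hne, ?_, Or.inl ?_⟩
  · rwa [← ht, List.take_left' hj]
  · rw [← ht, List.drop_left' hj]
    exact List.prefix_append _ _

theorem localPeriodF_le_localPeriod (hi : i ≤ v.length) (hx : OccursAt w x 0)
    (hv : OccursAt w v x.length) : (localPeriodF v i : ℝ≥0∞) ≤ localPeriod w (x.length + i) := by
  refine le_sInf ?_
  rintro _ ⟨r, hr, rfl⟩
  have hxv : wordPrefix w (x.length + v.length) = x ++ v := by
    rw [hv.wordPrefix_add_length, hx.wordPrefix_length]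
  obtain ⟨z, hz⟩ := hxv ▸ wordPrefix_prefix_wordPrefix (w := w)
    (le_max_right (x.length + i + r.length) (x.length + v.length))
  have hrF := hr.isRepWordAtF_wordPrefix (le_max_left _ (x.length + v.length))
  rw [← hz] at hrF
  exact Nat.cast_le.mpr (localPeriodF_le_length (hrF.of_append_append hi))

end LocalPeriodFactor

end PeriodicityComplexity

open PeriodicityComplexity

/-- If `w = x v z` (with `z` finite, or `z` an infinite tail) and
`1 ≤ i ≤ |v|`, then the local period of `w` at position `|x| + i` is at least the local
period of `v` at position `i`. -/
theorem localPeriod_factor_le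
    {A : Type*} :
    (∀ (x v z : List A) (i : ℕ), 1 ≤ i → i ≤ v.length →
      localPeriodF v i ≤ localPeriodF (x ++ v ++ z) (x.length + i)) ∧
    (∀ (w : ℕ → A) (x v : List A) (i : ℕ), 1 ≤ i → i ≤ v.length →
      OccursAt w x 0 → OccursAt w v x.length →
      (localPeriodF v i : ℝ≥0∞) ≤ localPeriod w (x.length + i)) :=
  ⟨fun _ _ _ _ h1 hi => localPeriodF_le_localPeriodF_append_append
      (List.ne_nil_of_length_pos (by omega)) hi,
    fun _ _ _ _ _ hi hx hv => localPeriodF_le_localPeriod hi hx hv⟩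
end
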